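/- Let (A,B₁), (A,B₂) be a split of a consistent instance (A,B) (so B = B₁ + B₂). If L(B₁) and L(B₂) are disjoint and L(A,B₁), L(A,B₂) form a partition of L(A,B), then the split is perfect: the set of solutions of (A,B) equals { X₁ + X₂ : AX₁ = B₁ and AX₂ = B₂ }. -/
import Mathlib


/-- A sum of cycles has all cycle lengths positive. -/
def Pos (A : ℕ →₀ ℕ) : Prop := ∀ a ∈ A.support, 0 < a

/-- The single cycle of length `n`. -/
noncomputable def Cyc (n : ℕ) : ℕ →₀ ℕ := Finsupp.single n 1

/-- Product of sums of cycles: `C_a · C_x = gcd(a,x) C_{lcm(a,x)}`, extended by distributivity. -/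
noncomputable def cmul (A X : ℕ →₀ ℕ) : ℕ →₀ ℕ :=
  A.sum fun a m => X.sum fun x n => (m * n * Nat.gcd a x) • Finsupp.single (Nat.lcm a x) 1

/-- Number of vertices of a sum of cycles. -/
def size (A : ℕ →₀ ℕ) : ℕ := A.sum fun ℓ m => ℓ * m

/-- The support `L(A,B)` of an instance. -/
def instSupp (A B : ℕ →₀ ℕ) : Set ℕ :=
  {x | 0 < x ∧ x ≤ size B / size A ∧ ∀ a ∈ A.support, Nat.lcm a x ∈ B.support}

/-- Consistency: `L(A) ∨ L(A,B) = L(B)`. -/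
def Consistent (A B : ℕ →₀ ℕ) : Prop :=
  {ℓ | ∃ a ∈ A.support, ∃ x ∈ instSupp A B, Nat.lcm a x = ℓ} = ↑B.support

/-- Cycle length multiplication `A ⊗ p`. -/
noncomputable def otimes (A : ℕ →₀ ℕ) (p : ℕ) : ℕ →₀ ℕ :=
  A.mapDomain (fun a => p * a)

/-- Cycle length division `A ⊘ p`: `(A ⊘ p)(a) = A (p*a)`. -/
noncomputable def oslash (A : ℕ →₀ ℕ) (p : ℕ) : ℕ →₀ ℕ :=
  if hp : p = 0 then 0 else
    Finsupp.comapDomain (fun a => p * a) A ((mul_right_injective₀ hp).injOn)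

/-- Contraction `A ⊟ p`: each cycle of length `p*a` becomes `p` cycles of length `a`. -/
noncomputable def contract (A : ℕ →₀ ℕ) (p : ℕ) : ℕ →₀ ℕ :=
  A.filter (fun a => ¬ p ∣ a) + p • oslash A p

/-! ### Auxiliary lemmas -/

lemma cmul_apply (A X : ℕ →₀ ℕ) (ℓ : ℕ) :
    cmul A X ℓ = ∑ a ∈ A.support, ∑ x ∈ X.support,
      (if Nat.lcm a x = ℓ then A a * X x * Nat.gcd a x else 0) := by
  simp only [cmul, Finsupp.sum, Finsupp.finset_sum_apply, Finsupp.smul_apply,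
    Finsupp.single_apply, mul_ite, mul_one, mul_zero, smul_eq_mul]

lemma cmul_add_right (A X Y : ℕ →₀ ℕ) : cmul A (X + Y) = cmul A X + cmul A Y := by
  unfold cmul
  rw [← Finsupp.sum_add]
  refine Finsupp.sum_congr fun a _ => ?_
  rw [Finsupp.sum_add_index'] <;> intros <;> simp [add_mul, mul_add, add_smul]

lemma mem_support_cmul {A X : ℕ →₀ ℕ} (hA : Pos A) {ℓ : ℕ} :
    ℓ ∈ (cmul A X).support ↔ ∃ a ∈ A.support, ∃ x ∈ X.support, Nat.lcm a x = ℓ := by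
  rw [Finsupp.mem_support_iff, cmul_apply]
  constructor
  · intro h
    obtain ⟨a, ha, h⟩ := Finset.exists_ne_zero_of_sum_ne_zero h
    obtain ⟨x, hx, h⟩ := Finset.exists_ne_zero_of_sum_ne_zero h
    refine ⟨a, ha, x, hx, ?_⟩
    by_contra hne
    simp [hne] at h
  · rintro ⟨a, ha, x, hx, rfl⟩
    have hpos : 0 < ∑ a' ∈ A.support, ∑ x' ∈ X.support,
        (if Nat.lcm a' x' = Nat.lcm a x then A a' * X x' * Nat.gcd a' x' else 0) := by
      refine Finset.sum_pos' (fun _ _ => Nat.zero_le _) ⟨a, ha, ?_⟩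
      refine Finset.sum_pos' (fun _ _ => Nat.zero_le _) ⟨x, hx, ?_⟩
      simp only [if_pos rfl]
      have h1 : 0 < A a := Nat.pos_of_ne_zero (Finsupp.mem_support_iff.mp ha)
      have h2 : 0 < X x := Nat.pos_of_ne_zero (Finsupp.mem_support_iff.mp hx)
      have h3 : 0 < Nat.gcd a x := Nat.gcd_pos_of_pos_left x (hA a ha)
      exact Nat.mul_pos (Nat.mul_pos h1 h2) h3
    omega

noncomputable def sizeHom : (ℕ →₀ ℕ) →+ ℕ :=
  Finsupp.liftAddHom fun ℓ => AddMonoidHom.mulLeft ℓ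

lemma sizeHom_eq (f : ℕ →₀ ℕ) : sizeHom f = size f := rfl

lemma size_cmul (A X : ℕ →₀ ℕ) : size (cmul A X) = size A * size X := by
  rw [← sizeHom_eq]
  unfold cmul
  rw [map_finsuppSum]
  have h1 : ∀ a m, sizeHom (X.sum fun x n => (m * n * Nat.gcd a x) • Finsupp.single (Nat.lcm a x) 1)
      = (a * m) * X.sum fun x n => x * n := by
    intro a m
    rw [map_finsuppSum, Finsupp.mul_sum]
    refine Finsupp.sum_congr fun x hx => ?_
    rw [map_nsmul, sizeHom_eq]
    have h2 : size (Finsupp.single (Nat.lcm a x) 1) = Nat.lcm a x := by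
      simp [size, Finsupp.sum_single_index]
    rw [h2, smul_eq_mul]
    have h3 := Nat.gcd_mul_lcm a x
    calc m * X x * Nat.gcd a x * Nat.lcm a x = m * X x * (Nat.gcd a x * Nat.lcm a x) := by ring
      _ = a * m * (x * X x) := by rw [h3]; ring
  calc (A.sum fun a m => sizeHom (X.sum fun x n => (m * n * Nat.gcd a x) • Finsupp.single (Nat.lcm a x) 1))
      = A.sum fun a m => (a * m) * size X := Finsupp.sum_congr fun a _ => h1 a (A a)
    _ = size A * size X := (Finsupp.sum_mul _ _).symm

lemma le_size {X : ℕ →₀ ℕ} {x : ℕ} (hx : x ∈ X.support) : x ≤ size X := by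
  have h1 : 0 < X x := Nat.pos_of_ne_zero (Finsupp.mem_support_iff.mp hx)
  calc x ≤ x * X x := Nat.le_mul_of_pos_right x h1
    _ ≤ size X := Finset.single_le_sum (f := fun ℓ => ℓ * X ℓ) (fun _ _ => Nat.zero_le _) hx

lemma size_pos {A : ℕ →₀ ℕ} (hA : Pos A) (hAne : A ≠ 0) : 0 < size A := by
  obtain ⟨a, ha⟩ := Finsupp.support_nonempty_iff.mpr hAne
  have := le_size ha
  have := hA a ha
  omega

theorem perfect_split (A B B₁ B₂ : ℕ →₀ ℕ) (hA : Pos A) (hB : Pos B)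
    (hAne : A ≠ 0) (hBne : B ≠ 0) (hB₁ : B₁ ≠ 0) (hB₂ : B₂ ≠ 0)
    (hsum : B = B₁ + B₂) (hcons : Consistent A B)
    (hdisj : Disjoint (↑B₁.support : Set ℕ) ↑B₂.support)
    (hpart₁ : instSupp A B₁ ∪ instSupp A B₂ = instSupp A B)
    (hpart₂ : Disjoint (instSupp A B₁) (instSupp A B₂)) :
    ∀ X : ℕ →₀ ℕ, Pos X →
      (cmul A X = B ↔
        ∃ X₁ X₂ : ℕ →₀ ℕ, Pos X₁ ∧ Pos X₂ ∧
          cmul A X₁ = B₁ ∧ cmul A X₂ = B₂ ∧ X = X₁ + X₂) := by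
  classical
  intro X hX
  constructor
  · intro h
    have hszA : 0 < size A := size_pos hA hAne
    have hsz : size B = size A * size X := by rw [← h, size_cmul]
    have hdiv : size B / size A = size X := by
      rw [hsz, Nat.mul_div_cancel_left _ hszA]
    -- every element of the support of X lies in instSupp A B
    have hmem : ∀ x ∈ X.support, x ∈ instSupp A B := by
      intro x hx
      refine ⟨hX x hx, ?_, ?_⟩
      · rw [hdiv]; exact le_size hx
      · intro a ha
        rw [← h]
        exact (mem_support_cmul hA).mpr ⟨a, ha, x, hx, rfl⟩
    set X₁ := X.filter (fun x => x ∈ instSupp A B₁) with hX₁def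
    set X₂ := X.filter (fun x => x ∉ instSupp A B₁) with hX₂def
    have hXsum : X = X₁ + X₂ := (Finsupp.filter_pos_add_filter_neg X _).symm
    have hs₁ : ∀ x ∈ X₁.support, x ∈ X.support ∧ x ∈ instSupp A B₁ := by
      intro x hx
      rw [hX₁def, Finsupp.support_filter, Finset.mem_filter] at hx
      exact hx
    have hs₂ : ∀ x ∈ X₂.support, x ∈ X.support ∧ x ∈ instSupp A B₂ := by
      intro x hx
      rw [hX₂def, Finsupp.support_filter, Finset.mem_filter] at hx
      refine ⟨hx.1, ?_⟩
      have := hmem x hx.1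
      rw [← hpart₁] at this
      rcases this with h' | h'
      · exact absurd h' hx.2
      · exact h'
    have hsub₁ : (cmul A X₁).support ⊆ B₁.support := by
      intro ℓ hℓ
      obtain ⟨a, ha, x, hx, rfl⟩ := (mem_support_cmul hA).mp hℓ
      exact (hs₁ x hx).2.2.2 a ha
    have hsub₂ : (cmul A X₂).support ⊆ B₂.support := by
      intro ℓ hℓ
      obtain ⟨a, ha, x, hx, rfl⟩ := (mem_support_cmul hA).mp hℓ
      exact (hs₂ x hx).2.2.2 a ha
    have heq : cmul A X₁ + cmul A X₂ = B₁ + B₂ := by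
      rw [← cmul_add_right, ← hXsum, h, hsum]
    have hd : ∀ ℓ, B₁ ℓ = 0 ∨ B₂ ℓ = 0 := by
      intro ℓ
      by_contra hc
      push_neg at hc
      exact Set.disjoint_left.mp hdisj (Finsupp.mem_support_iff.mpr hc.1)
        (Finsupp.mem_support_iff.mpr hc.2)
    have hc₁ : ∀ ℓ, B₁ ℓ = 0 → cmul A X₁ ℓ = 0 := by
      intro ℓ hz
      by_contra hc
      exact (Finsupp.mem_support_iff.mp (hsub₁ (Finsupp.mem_support_iff.mpr hc))) hz
    have hc₂ : ∀ ℓ, B₂ ℓ = 0 → cmul A X₂ ℓ = 0 := by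
      intro ℓ hz
      by_contra hc
      exact (Finsupp.mem_support_iff.mp (hsub₂ (Finsupp.mem_support_iff.mpr hc))) hz
    have heq₁ : cmul A X₁ = B₁ := by
      ext ℓ
      have hℓ : cmul A X₁ ℓ + cmul A X₂ ℓ = B₁ ℓ + B₂ ℓ := by
        have := congrArg (fun f : ℕ →₀ ℕ => f ℓ) heq
        simpa using this
      rcases hd ℓ with h' | h'
      · have := hc₁ ℓ h'; omega
      · have := hc₂ ℓ h'; omega
    have heq₂ : cmul A X₂ = B₂ := by
      have := heq
      rw [heq₁] at this
      exact add_left_cancel this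
    refine ⟨X₁, X₂, ?_, ?_, heq₁, heq₂, hXsum⟩
    · intro x hx; exact hX x (hs₁ x hx).1
    · intro x hx; exact hX x (hs₂ x hx).1
  · rintro ⟨X₁, X₂, _, _, e1, e2, rfl⟩
    rw [cmul_add_right, e1, e2, hsum]
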